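/- For all integers n ≥ 0 and i, the q-Eulerian numbers satisfy ∑_k [n choose k]_q · A_{n-k, i-k}(q) − ∑_k [n choose k]_q · A_{n-k, i-1}(q) = 1 if i = 0 and n ≠ 0, −1 if i = n and i ≠ 0, and 0 otherwise. -/

import Mathlib

/-!
Clearing denominators, the defining identity reads
`(e(tz;q) − t e(z;q)) · ∑ A_n z^n/(q;q)_n = e(z;q) − e(tz;q)`. All three series are q-exponential
generating functions, whose products are q-binomial convolutions, so comparing coefficients of
`z^n/(q;q)_n` gives the polynomial identity `∑_k [n choose k]_q (t^k − t) A_{n−k}(t) = 1 − t^n`;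
the recurrence is its coefficient of `t^i`.
-/

open Polynomial PowerSeries

/-- The variable `q` in the field `ℚ(q)` of rational functions. -/
noncomputable def qq : RatFunc ℚ := RatFunc.X

/-- The q-shifted factorial `(q;q)_n = ∏_{i=1}^n (1 - q^i)`. -/
noncomputable def qfac (n : ℕ) : RatFunc ℚ := ∏ i ∈ Finset.range n, (1 - qq ^ (i + 1))

/-- The q-exponential `e(z;q) = ∑ z^n/(q;q)_n`, as a power series in `z` over `ℚ(q)[t]`. -/
noncomputable def qexpZ : PowerSeries (Polynomial (RatFunc ℚ)) :=
  PowerSeries.mk fun n => Polynomial.C (qfac n)⁻¹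

/-- `e(tz;q) = ∑ t^n z^n/(q;q)_n`, as a power series in `z` over `ℚ(q)[t]`. -/
noncomputable def qexpTZ : PowerSeries (Polynomial (RatFunc ℚ)) :=
  PowerSeries.mk fun n => Polynomial.X ^ n * Polynomial.C (qfac n)⁻¹

/-- The q-binomial coefficient `[n choose k]_q ∈ ℚ(q)`. -/
noncomputable def qbinom (n k : ℕ) : RatFunc ℚ :=
  if k ≤ n then qfac n / (qfac (n - k) * qfac k) else 0

lemma qfac_ne_zero (n : ℕ) : qfac n ≠ 0 := by
  refine Finset.prod_ne_zero_iff.mpr fun i _ h => ?_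
  have h' : algebraMap ℚ[X] (RatFunc ℚ) (Polynomial.X ^ (i + 1)) =
      algebraMap ℚ[X] (RatFunc ℚ) 1 := by
    simpa [qq] using (sub_eq_zero.mp h).symm
  simpa using congrArg natDegree (RatFunc.algebraMap_injective ℚ h')

lemma qbinom_of_le {n k : ℕ} (hk : k ≤ n) :
    qbinom n k = qfac n * (qfac k)⁻¹ * (qfac (n - k))⁻¹ := by
  rw [qbinom, if_pos hk, div_eq_mul_inv, mul_inv, mul_comm (qfac (n - k))⁻¹, mul_assoc]

noncomputable def qEGF (a : ℕ → (RatFunc ℚ)[X]) : PowerSeries (RatFunc ℚ)[X] :=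
  PowerSeries.mk fun n => a n * Polynomial.C (qfac n)⁻¹

lemma coeff_qEGF_mul_C_qfac (a : ℕ → (RatFunc ℚ)[X]) (n : ℕ) :
    PowerSeries.coeff n (qEGF a) * Polynomial.C (qfac n) = a n := by
  rw [qEGF, PowerSeries.coeff_mk, mul_assoc, ← Polynomial.C_mul, inv_mul_cancel₀ (qfac_ne_zero n),
    Polynomial.C_1, mul_one]

lemma coeff_qEGF_mul_mul_C_qfac (a b : ℕ → (RatFunc ℚ)[X]) (n : ℕ) :
    PowerSeries.coeff n (qEGF a * qEGF b) * Polynomial.C (qfac n) =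
      ∑ k ∈ Finset.range (n + 1), Polynomial.C (qbinom n k) * (a k * b (n - k)) := by
  rw [PowerSeries.coeff_mul, Finset.Nat.sum_antidiagonal_eq_sum_range_succ_mk, Finset.sum_mul]
  refine Finset.sum_congr rfl fun k hk => ?_
  rw [qbinom_of_le (Nat.lt_succ_iff.mp (Finset.mem_range.mp hk))]
  simp only [qEGF, PowerSeries.coeff_mk, Polynomial.C_mul]
  ring

lemma qexpTZ_sub_C_X_mul_qexpZ :
    qexpTZ - PowerSeries.C Polynomial.X * qexpZ =
      qEGF fun k => Polynomial.X ^ k - Polynomial.X := by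
  ext n
  simp [qexpTZ, qexpZ, qEGF, sub_mul]

lemma qexpZ_sub_qexpTZ : qexpZ - qexpTZ = qEGF fun k => 1 - Polynomial.X ^ k := by
  ext n
  simp [qexpTZ, qexpZ, qEGF, sub_mul]

lemma sum_qbinom_mul_eq_one_sub_X_pow (A : ℕ → (RatFunc ℚ)[X])
    (hA : (qexpTZ - PowerSeries.C (R := Polynomial (RatFunc ℚ)) Polynomial.X * qexpZ) *
        PowerSeries.mk (fun n => A n * Polynomial.C (qfac n)⁻¹) = qexpZ - qexpTZ) (n : ℕ) :
    ∑ k ∈ Finset.range (n + 1),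
        Polynomial.C (qbinom n k) * ((Polynomial.X ^ k - Polynomial.X) * A (n - k)) =
      1 - Polynomial.X ^ n := by
  rw [qexpTZ_sub_C_X_mul_qexpZ, qexpZ_sub_qexpTZ] at hA
  rw [← coeff_qEGF_mul_mul_C_qfac, ← coeff_qEGF_mul_C_qfac fun k => 1 - Polynomial.X ^ k, ← hA]
  rfl

lemma coeff_X_pow_sub_X_mul {R : Type*} [Ring R] (p : R[X]) (k i : ℕ) :
    ((Polynomial.X ^ k - Polynomial.X) * p).coeff i =
      (if k ≤ i then p.coeff (i - k) else 0) - (if 1 ≤ i then p.coeff (i - 1) else 0) := by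
  rw [sub_mul, Polynomial.coeff_sub, Polynomial.coeff_X_pow_mul', ← pow_one Polynomial.X,
    Polynomial.coeff_X_pow_mul']

lemma coeff_one_sub_X_pow {R : Type*} [Ring R] (n i : ℕ) :
    (1 - Polynomial.X ^ n : R[X]).coeff i =
      if i = 0 ∧ n ≠ 0 then 1 else if i = n ∧ i ≠ 0 then -1 else 0 := by
  rw [Polynomial.coeff_sub, Polynomial.coeff_one, Polynomial.coeff_X_pow]
  split_ifs <;> simp_all

/-- `∑_k [n choose k]_q A_{n-k,i-k}(q) − ∑_k [n choose k]_q A_{n-k,i-1}(q)`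
equals `1` if `i = 0 ≠ n`, `−1` if `i = n ≠ 0`, and `0` otherwise.  Here
`A_{m,j}(q)` is the coefficient of `t^j` in the q-Eulerian polynomial `A m`
(interpreted as `0` for negative index `j`), and the sums over `k ≥ 0`
reduce to `0 ≤ k ≤ n` since the q-binomial vanishes beyond. -/
theorem qEulerian_recurrence (A : ℕ → Polynomial (RatFunc ℚ))
    (hA : (qexpTZ - PowerSeries.C (R := Polynomial (RatFunc ℚ)) Polynomial.X * qexpZ) *
        PowerSeries.mk (fun n => A n * Polynomial.C (qfac n)⁻¹) = qexpZ - qexpTZ) :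
    ∀ n i : ℕ,
      (∑ k ∈ Finset.range (n + 1),
          if k ≤ i then qbinom n k * (A (n - k)).coeff (i - k) else 0) -
      (∑ k ∈ Finset.range (n + 1),
          if 1 ≤ i then qbinom n k * (A (n - k)).coeff (i - 1) else 0) =
      if i = 0 ∧ n ≠ 0 then 1 else if i = n ∧ i ≠ 0 then -1 else 0 := by
  intro n i
  rw [← coeff_one_sub_X_pow, ← sum_qbinom_mul_eq_one_sub_X_pow A hA n, finsetSum_coeff,
    ← Finset.sum_sub_distrib]
  refine Finset.sum_congr rfl fun k _ => ?_
  rw [Polynomial.coeff_C_mul, coeff_X_pow_sub_X_mul, mul_sub, mul_ite, mul_ite, mul_zero]
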